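/- Let ξ : ℝ → ℝ^m solve ξ''(t) + R(t)ξ(t) = 0 with R(t) symmetric negative semidefinite. If |ξ(t)| is nondecreasing in t and ξ'(0) = 0, then ξ'(t) = 0 and R(t)ξ(t) = 0 for all t ≤ 0. -/

import Mathlib

/-!
`N = ξ ⬝ᵥ ξ` satisfies `N'' = 2 (|ξ'|² - Rξ ⬝ᵥ ξ) ≥ 0`, so `N'` is nondecreasing; `N'` is
also nonnegative since `N` is nondecreasing, and `N'(0) = 2 ξ'(0) ⬝ᵥ ξ(0) = 0`. Hence `N' = 0`
on `(-∞, 0]`, so `N'' = 0` on `(-∞, 0)`, and both nonnegative terms of `N''` vanish there: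
`ξ' = 0` on `(-∞, 0]`. Then `ξ'' = 0` on `(-∞, 0]` by continuity, and `Rξ = -ξ'' = 0`.
-/

open Matrix Set

theorem dotProduct_self_nonneg {R n : Type*} [Fintype n] [Ring R] [LinearOrder R]
    [IsStrictOrderedRing R] (v : n → R) : 0 ≤ v ⬝ᵥ v :=
  Fintype.sum_nonneg fun i => mul_self_nonneg (v i)

theorem HasDerivAt.dotProduct {𝕜 ι : Type*} [NontriviallyNormedField 𝕜] [Fintype ι]
    {f g : 𝕜 → ι → 𝕜} {f' g' : ι → 𝕜} {x : 𝕜} (hf : HasDerivAt f f' x)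
    (hg : HasDerivAt g g' x) :
    HasDerivAt (fun t => f t ⬝ᵥ g t) (f' ⬝ᵥ g x + f x ⬝ᵥ g') x := by
  simpa only [_root_.dotProduct, Finset.sum_add_distrib] using
    HasDerivAt.fun_sum (u := Finset.univ) fun i _ =>
      (hasDerivAt_pi.mp hf i).fun_mul (hasDerivAt_pi.mp hg i)

theorem HasDerivAt.dotProduct_self {𝕜 ι : Type*} [NontriviallyNormedField 𝕜] [Fintype ι]
    {f : 𝕜 → ι → 𝕜} {f' : ι → 𝕜} {x : 𝕜} (hf : HasDerivAt f f' x) :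
    HasDerivAt (fun t => f t ⬝ᵥ f t) (2 * (f' ⬝ᵥ f x)) x := by
  simpa [two_mul, dotProduct_comm f'] using hf.dotProduct hf

theorem deriv_eq_zero_of_eqOn_zero {E : Type*} [NormedAddCommGroup E] [NormedSpace ℝ E]
    {f : ℝ → E} {s : Set ℝ} {t : ℝ} (hs : IsOpen s) (hf : EqOn f 0 s) (ht : t ∈ s) :
    deriv f t = 0 := by
  have : f =ᶠ[nhds t] fun _ => 0 := Filter.eventually_of_mem (hs.mem_nhds ht) hf
  rw [this.deriv_eq, deriv_const]

theorem deriv_eqOn_zero_Iic {E : Type*} [NormedAddCommGroup E] [NormedSpace ℝ E]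
    {f : ℝ → E} {a : ℝ} (hf : Continuous (deriv f)) (h : EqOn f 0 (Iic a)) :
    EqOn (deriv f) 0 (Iic a) :=
  EqOn.of_subset_closure
    (fun _ ht => deriv_eq_zero_of_eqOn_zero isOpen_Iio (h.mono Iio_subset_Iic_self) ht)
    hf.continuousOn continuousOn_const Iio_subset_Iic_self (closure_Iio a).ge

theorem Monotone.deriv_eqOn_zero_Iic {g : ℝ → ℝ} {a : ℝ} (hg : Monotone g)
    (hg' : Monotone (deriv g)) (ha : deriv g a = 0) : EqOn (deriv g) 0 (Iic a) :=
  fun _ ht => le_antisymm (ha ▸ hg' ht : deriv g _ ≤ 0) hg.deriv_nonneg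

section JacobiEquation

variable {ι : Type*} [Fintype ι] {R : ℝ → Matrix ι ι ℝ} {ξ : ℝ → ι → ℝ}

theorem deriv_dotProduct_self (hξ : Differentiable ℝ ξ) :
    deriv (fun t => ξ t ⬝ᵥ ξ t) = fun t => 2 * (deriv ξ t ⬝ᵥ ξ t) :=
  funext fun t => (hξ t).hasDerivAt.dotProduct_self.deriv

theorem hasDerivAt_deriv_dotProduct_self (hξ : ContDiff ℝ 2 ξ)
    (hODE : ∀ t, deriv (deriv ξ) t + R t *ᵥ ξ t = 0) (t : ℝ) :
    HasDerivAt (deriv fun t => ξ t ⬝ᵥ ξ t)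
      (2 * (deriv ξ t ⬝ᵥ deriv ξ t - R t *ᵥ ξ t ⬝ᵥ ξ t)) t := by
  have hξd : Differentiable ℝ ξ := hξ.differentiable (by norm_num)
  have hξ'' : deriv (deriv ξ) t = -(R t *ᵥ ξ t) := eq_neg_of_add_eq_zero_left (hODE t)
  rw [deriv_dotProduct_self hξd]
  refine (((hξ.deriv'.differentiable one_ne_zero t).hasDerivAt.dotProduct
    (hξd t).hasDerivAt).const_mul 2).congr_deriv ?_
  rw [hξ'', neg_dotProduct]
  ring

theorem monotone_deriv_dotProduct_self (hRneg : ∀ t x, R t *ᵥ x ⬝ᵥ x ≤ 0)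
    (hξ : ContDiff ℝ 2 ξ) (hODE : ∀ t, deriv (deriv ξ) t + R t *ᵥ ξ t = 0) :
    Monotone (deriv fun t => ξ t ⬝ᵥ ξ t) := by
  refine monotone_of_deriv_nonneg
    (fun t => (hasDerivAt_deriv_dotProduct_self hξ hODE t).differentiableAt) fun t => ?_
  rw [(hasDerivAt_deriv_dotProduct_self hξ hODE t).deriv]
  linarith [hRneg t (ξ t), dotProduct_self_nonneg (deriv ξ t)]

theorem deriv_eqOn_zero_Iic_of_monotone (hRneg : ∀ t x, R t *ᵥ x ⬝ᵥ x ≤ 0)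
    (hξ : ContDiff ℝ 2 ξ) (hODE : ∀ t, deriv (deriv ξ) t + R t *ᵥ ξ t = 0)
    (hmono : Monotone fun t => ξ t ⬝ᵥ ξ t) {a : ℝ} (ha : deriv ξ a = 0) :
    EqOn (deriv ξ) 0 (Iic a) := by
  have hN' : EqOn (deriv fun t => ξ t ⬝ᵥ ξ t) 0 (Iic a) :=
    hmono.deriv_eqOn_zero_Iic (monotone_deriv_dotProduct_self hRneg hξ hODE) <| by
      simp [deriv_dotProduct_self (hξ.differentiable (by norm_num)), ha]
  intro t ht
  rcases (mem_Iic.mp ht).lt_or_eq with ht | rfl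
  · have hN'' := (hasDerivAt_deriv_dotProduct_self hξ hODE t).deriv
    rw [deriv_eq_zero_of_eqOn_zero isOpen_Iio (hN'.mono Iio_subset_Iic_self) ht] at hN''
    refine dotProduct_self_eq_zero.mp (le_antisymm ?_ (dotProduct_self_nonneg _))
    linarith [hRneg t (ξ t)]
  · exact ha

end JacobiEquation

theorem stmt5_general {m : ℕ} (R : ℝ → Matrix (Fin m) (Fin m) ℝ)
    (hRneg : ∀ t x, (R t).mulVec x ⬝ᵥ x ≤ 0)
    (ξ : ℝ → Fin m → ℝ) (hξ : ContDiff ℝ 2 ξ)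
    (hODE : ∀ t, deriv (deriv ξ) t + (R t).mulVec (ξ t) = 0)
    (hmono : Monotone (fun t => Real.sqrt (ξ t ⬝ᵥ ξ t)))
    (h1 : deriv ξ 0 = 0) :
    ∀ t ≤ (0:ℝ), deriv ξ t = 0 ∧ (R t).mulVec (ξ t) = 0 := by
  have hnormSq : Monotone fun t => ξ t ⬝ᵥ ξ t := fun _ _ hst =>
    (Real.sqrt_le_sqrt_iff (dotProduct_self_nonneg _)).mp (hmono hst)
  have hξ' := deriv_eqOn_zero_Iic_of_monotone hRneg hξ hODE hnormSq h1
  have hξ'' := deriv_eqOn_zero_Iic (hξ.deriv'.continuous_deriv le_rfl) hξ'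
  intro t ht
  refine ⟨hξ' ht, ?_⟩
  simpa [hξ'' ht] using hODE t

/-- For a solution of `ξ'' + R(t) ξ = 0` with `R(t)` symmetric negative
semidefinite, if `|ξ(t)|` is nondecreasing and `ξ'(0) = 0`, then `ξ'(t) = 0`
and `R(t) ξ(t) = 0` for all `t ≤ 0`. -/
theorem stmt5 {m : ℕ} (R : ℝ → Matrix (Fin m) (Fin m) ℝ) (hRc : Continuous R)
    (hRsym : ∀ t, (R t).IsSymm) (hRneg : ∀ t x, (R t).mulVec x ⬝ᵥ x ≤ 0)
    (ξ : ℝ → Fin m → ℝ) (hξ : ContDiff ℝ 2 ξ)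
    (hODE : ∀ t, deriv (deriv ξ) t + (R t).mulVec (ξ t) = 0)
    (hmono : Monotone (fun t => Real.sqrt (ξ t ⬝ᵥ ξ t)))
    (h1 : deriv ξ 0 = 0) :
    ∀ t ≤ (0:ℝ), deriv ξ t = 0 ∧ (R t).mulVec (ξ t) = 0 :=
  stmt5_general R hRneg ξ hξ hODE hmono h1
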